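/- arXiv:1411.4644 — 3 statements merged into one kernel-verified Lean document; each statement's English description precedes it below -/
import Mathlib

section
/- For every real a > 0 and integer n ≥ 1, the generalized exponential integral satisfies (a + n)^{-1} < e^a · E_n(a) ≤ (a + n - 1)^{-1}, where E_n(a) = ∫_1^∞ e^{-a t} t^{-n} dt. -/
/-!
Lower bound: for `t > 1` we have `t⁻¹ > e^{-(t-1)}` (from `e^x > 1 + x`), so `E_n(a)` strictly
exceeds `∫_1^∞ e^{-at} e^{-n(t-1)} dt = e^{-a} / (a + n)`.

Upper bound: integrating the derivative of `-e^{-at} t^{-m}` over `(1, ∞)` gives the recurrence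
`a E_m(a) + m E_{m+1}(a) = e^{-a}`, and `E_{m+1} ≤ E_m` since `t⁻¹ ≤ 1`; hence
`(a + m) E_{m+1}(a) ≤ e^{-a}`.
-/

open Real MeasureTheory Set

noncomputable def Egen (n : ℕ) (a : ℝ) : ℝ :=
  ∫ t in Set.Ioi (1:ℝ), Real.exp (-a * t) * t⁻¹ ^ n

open Filter

lemma setIntegral_lt_setIntegral_of_forall_lt {X : Type*} [MeasurableSpace X] {μ : Measure X}
    {s : Set X} {f g : X → ℝ} (hs : MeasurableSet s) (hμs : μ s ≠ 0)
    (hf : IntegrableOn f s μ) (hg : IntegrableOn g s μ) (hlt : ∀ x ∈ s, f x < g x) :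
    ∫ x in s, f x ∂μ < ∫ x in s, g x ∂μ := by
  have hsupp : Function.support (g - f) ∩ s = s :=
    inter_eq_right.2 fun x hx => (sub_pos.2 (hlt x hx)).ne'
  rw [← sub_pos, ← integral_sub hg hf]
  refine (setIntegral_pos_iff_support_of_nonneg_ae ?_ (hg.sub hf)).2 ?_
  · exact (ae_restrict_iff' hs).2 (ae_of_all _ fun x hx => (sub_pos.2 (hlt x hx)).le)
  · rwa [hsupp, pos_iff_ne_zero]

lemma integral_Ioi_exp_neg_mul {b : ℝ} (hb : 0 < b) (c : ℝ) :
    ∫ t in Ioi c, exp (-b * t) = exp (-b * c) / b := by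
  rw [integral_exp_mul_Ioi (neg_neg_of_pos hb), div_neg, neg_div, neg_neg]

lemma integrableOn_exp_neg_mul_inv_pow {a : ℝ} (ha : 0 < a) (k : ℕ) :
    IntegrableOn (fun t : ℝ => exp (-a * t) * t⁻¹ ^ k) (Ioi 1) := by
  refine (exp_neg_integrableOn_Ioi 1 ha).mul_bdd (c := 1) ?_ ?_
  · exact (measurable_inv.pow_const k).aestronglyMeasurable
  · refine (ae_restrict_iff' measurableSet_Ioi).2 (ae_of_all _ fun t (ht : 1 < t) => ?_)
    rw [norm_pow, norm_inv, Real.norm_of_nonneg (by linarith)]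
    exact pow_le_one₀ (by positivity) (inv_le_one_of_one_le₀ ht.le)

lemma exp_neg_sub_one_lt_inv {t : ℝ} (ht : 1 < t) : exp (-(t - 1)) < t⁻¹ := by
  rw [exp_neg]
  refine inv_strictAnti₀ (by linarith) ?_
  linarith [add_one_lt_exp (sub_ne_zero.2 ht.ne')]

lemma exp_mul_exp_neg_add_mul_lt {a t : ℝ} (ht : 1 < t) {n : ℕ} (hn : n ≠ 0) :
    exp n * exp (-(a + n) * t) < exp (-a * t) * t⁻¹ ^ n := by
  have hrw : exp n * exp (-(a + n) * t) = exp (-a * t) * exp (-(t - 1)) ^ n := by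
    rw [← exp_nat_mul, ← exp_add, ← exp_add]; ring_nf
  rw [hrw]
  exact mul_lt_mul_of_pos_left
    (pow_lt_pow_left₀ (exp_neg_sub_one_lt_inv ht) (exp_pos _).le hn) (exp_pos _)

lemma inv_add_lt_exp_mul_Egen {a : ℝ} (ha : 0 < a) {n : ℕ} (hn : n ≠ 0) :
    (a + n)⁻¹ < exp a * Egen n a := by
  have han : 0 < a + n := by positivity
  have hcomp : ∫ t in Ioi 1, exp n * exp (-(a + n) * t) = exp (-a) * (a + n)⁻¹ := by
    rw [integral_const_mul, integral_Ioi_exp_neg_mul han, div_eq_mul_inv, ← mul_assoc,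
      ← exp_add]
    ring_nf
  have hlt : exp (-a) * (a + n)⁻¹ < Egen n a := by
    rw [← hcomp]
    exact setIntegral_lt_setIntegral_of_forall_lt measurableSet_Ioi (by simp)
      ((exp_neg_integrableOn_Ioi 1 han).const_mul _) (integrableOn_exp_neg_mul_inv_pow ha n)
      fun t ht => exp_mul_exp_neg_add_mul_lt ht hn
  calc (a + n)⁻¹ = exp a * (exp (-a) * (a + n)⁻¹) := by
        rw [← mul_assoc, ← exp_add, add_neg_cancel, exp_zero, one_mul]
    _ < exp a * Egen n a := mul_lt_mul_of_pos_left hlt (exp_pos a)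

lemma hasDerivAt_inv_pow {x : ℝ} (hx : x ≠ 0) (m : ℕ) :
    HasDerivAt (fun t : ℝ => t⁻¹ ^ m) (-m * x⁻¹ ^ (m + 1)) x := by
  refine ((hasDerivAt_inv hx).fun_pow m).congr_deriv ?_
  rcases m with _ | m
  · simp
  · rw [Nat.add_sub_cancel, ← inv_pow]
    ring

lemma mul_Egen_add_mul_Egen_succ {a : ℝ} (ha : 0 < a) (m : ℕ) :
    a * Egen m a + m * Egen (m + 1) a = exp (-a) := by
  have hderiv : ∀ x ∈ Ici (1 : ℝ), HasDerivAt (fun t => -(exp (-a * t) * t⁻¹ ^ m))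
      (a * (exp (-a * x) * x⁻¹ ^ m) + m * (exp (-a * x) * x⁻¹ ^ (m + 1))) x := by
    intro x (hx : 1 ≤ x)
    refine ((((hasDerivAt_id' x).const_mul (-a)).exp.fun_mul
      (hasDerivAt_inv_pow (zero_lt_one.trans_le hx).ne' m)).fun_neg).congr_deriv ?_
    ring
  have hlim : Tendsto (fun t => -(exp (-a * t) * t⁻¹ ^ m)) atTop (nhds 0) := by
    simpa using ((tendsto_exp_atBot.comp (tendsto_id.const_mul_atTop_of_neg
      (neg_neg_of_pos ha))).mul (tendsto_inv_atTop_zero.pow m)).neg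
  have hint_m := (integrableOn_exp_neg_mul_inv_pow ha m).const_mul a
  have hint_succ := (integrableOn_exp_neg_mul_inv_pow ha (m + 1)).const_mul (m : ℝ)
  have hint := integral_Ioi_of_hasDerivAt_of_tendsto' hderiv (hint_m.add hint_succ) hlim
  rw [integral_add hint_m hint_succ, integral_const_mul, integral_const_mul] at hint
  simpa [Egen] using hint

lemma Egen_succ_le {a : ℝ} (ha : 0 < a) (m : ℕ) : Egen (m + 1) a ≤ Egen m a :=
  setIntegral_mono_on (integrableOn_exp_neg_mul_inv_pow ha (m + 1))
    (integrableOn_exp_neg_mul_inv_pow ha m) measurableSet_Ioi fun t (ht : 1 < t) =>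
    mul_le_mul_of_nonneg_left (pow_le_pow_of_le_one (by positivity)
      (inv_le_one_of_one_le₀ ht.le) m.le_succ) (exp_pos _).le

lemma exp_mul_Egen_succ_le {a : ℝ} (ha : 0 < a) (m : ℕ) :
    exp a * Egen (m + 1) a ≤ (a + m)⁻¹ := by
  have hrec := mul_Egen_add_mul_Egen_succ ha m
  have hmono := mul_le_mul_of_nonneg_left (Egen_succ_le ha m) ha.le
  calc exp a * Egen (m + 1) a ≤ exp a * (exp (-a) / (a + m)) := by
        gcongr
        rw [le_div_iff₀ (by positivity)]
        linarith
    _ = (a + m)⁻¹ := by rw [mul_div_assoc', ← exp_add, add_neg_cancel, exp_zero, one_div]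

theorem stmt_3 (a : ℝ) (ha : 0 < a) (n : ℕ) (hn : 1 ≤ n) :
    (a + n)⁻¹ < Real.exp a * Egen n a ∧
    Real.exp a * Egen n a ≤ (a + n - 1)⁻¹ := by
  obtain ⟨m, rfl⟩ : ∃ m, n = m + 1 := ⟨n - 1, by omega⟩
  refine ⟨inv_add_lt_exp_mul_Egen ha m.succ_ne_zero, ?_⟩
  convert exp_mul_Egen_succ_le ha m using 2
  push_cast
  ring
end

section
/- For every λ ∈ ℂ, the sequence φ_λ(x) = Σ_{k=0}^x ((-λ)^k / k!) · C(x,k) satisfies the eigenvalue equation for L_0: -(x+1)φ_λ(x+1) + (2x+1)φ_λ(x) - x φ_λ(x-1) = λ φ_λ(x) for all x ≥ 1, and -φ_λ(1) + φ_λ(0) = λ φ_λ(0). -/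
open Finset

noncomputable def phiC (lam : ℂ) (x : ℕ) : ℂ :=
  ∑ k ∈ Finset.range (x + 1), (-lam) ^ k / (k.factorial : ℂ) * (x.choose k : ℂ)

/-! In the Newton basis `y ↦ y.choose k` the operator `L₀` lowers the degree:
`L₀ (choose · (k+1)) = -(k+1) • choose · k` and `L₀ 1 = 0`, so on coefficient sequences it acts by
`a ↦ (k ↦ -(k+1) a (k+1))`. The Laguerre coefficients `a k = (-λ)^k / k!` satisfy
`-(k+1) a (k+1) = λ a k`, hence `L₀ φ_λ = λ φ_λ`. -/

section
variable {R : Type*} [CommRing R]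

/-- At `x = 0` the factor `x` kills the truncated `v (0 - 1)`, so this formula is also the
boundary row `v 0 - v 1`. -/
def jacobiOp (v : ℕ → R) (x : ℕ) : R :=
  -((x : R) + 1) * v (x + 1) + (2 * (x : R) + 1) * v x - (x : R) * v (x - 1)

def newtonSeries (a : ℕ → R) (x : ℕ) : R :=
  ∑ k ∈ range (x + 1), a k * (x.choose k : R)

theorem jacobiOp_sum {ι : Type*} (s : Finset ι) (c : ι → R) (f : ι → ℕ → R) (x : ℕ) :
    jacobiOp (fun y => ∑ i ∈ s, c i * f i y) x = ∑ i ∈ s, c i * jacobiOp (f i) x := by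
  simp only [jacobiOp, mul_sum, ← sum_add_distrib, ← sum_sub_distrib]
  exact sum_congr rfl fun _ _ => by ring

theorem jacobiOp_choose_zero (x : ℕ) : jacobiOp (fun y => (y.choose 0 : R)) x = 0 := by
  simp only [jacobiOp, Nat.choose_zero_right, Nat.cast_one]
  ring

theorem jacobiOp_choose_succ (k x : ℕ) :
    jacobiOp (fun y => (y.choose (k + 1) : R)) x = -((k : R) + 1) * (x.choose k : R) := by
  rcases x with _ | m
  · rcases k with _ | k <;> simp [jacobiOp, Nat.choose_eq_zero_of_lt]
  · have pascal₁ := congrArg (Nat.cast (R := R)) (Nat.choose_succ_succ' (m + 1) k)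
    have pascal₀ := congrArg (Nat.cast (R := R)) (Nat.choose_succ_succ' m k)
    have absorb₀ := congrArg (Nat.cast (R := R)) (Nat.add_one_mul_choose_eq m k)
    have absorb₁ := congrArg (Nat.cast (R := R)) (Nat.add_one_mul_choose_eq (m + 1) k)
    push_cast at pascal₁ pascal₀ absorb₀ absorb₁
    simp only [jacobiOp, Nat.add_sub_cancel]
    push_cast
    linear_combination (-((m : R) + k + 3)) * pascal₁ + ((m : R) + 1) * pascal₀ + absorb₀ - absorb₁

theorem newtonSeries_eq_sum_range (a : ℕ → R) {x N : ℕ} (h : x < N) :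
    newtonSeries a x = ∑ k ∈ range N, a k * (x.choose k : R) := by
  refine sum_subset (range_subset_range.2 h) fun k _ hk => ?_
  rw [Nat.choose_eq_zero_of_lt (by simpa using hk), Nat.cast_zero, mul_zero]

theorem jacobiOp_newtonSeries (a : ℕ → R) (x : ℕ) :
    jacobiOp (newtonSeries a) x = newtonSeries (fun k => -((k : R) + 1) * a (k + 1)) x := by
  have local_eq : jacobiOp (newtonSeries a) x =
      jacobiOp (fun y => ∑ k ∈ range (x + 2), a k * (y.choose k : R)) x := by
    simp only [jacobiOp, newtonSeries_eq_sum_range a (show x + 1 < x + 2 by omega),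
      newtonSeries_eq_sum_range a (show x < x + 2 by omega),
      newtonSeries_eq_sum_range a (show x - 1 < x + 2 by omega)]
  rw [local_eq, jacobiOp_sum, sum_range_succ', jacobiOp_choose_zero, mul_zero, add_zero,
    newtonSeries]
  exact sum_congr rfl fun k _ => by rw [jacobiOp_choose_succ]; ring

end

theorem phiC_eq_newtonSeries (lam : ℂ) :
    phiC lam = newtonSeries fun k => (-lam) ^ k / (k.factorial : ℂ) := rfl

theorem laguerre_coeff_succ (lam : ℂ) (k : ℕ) :
    -((k : ℂ) + 1) * ((-lam) ^ (k + 1) / ((k + 1).factorial : ℂ))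
      = lam * ((-lam) ^ k / (k.factorial : ℂ)) := by
  rw [Nat.factorial_succ, Nat.cast_mul, pow_succ]
  field_simp
  push_cast
  ring

theorem jacobiOp_phiC (lam : ℂ) (x : ℕ) : jacobiOp (phiC lam) x = lam * phiC lam x := by
  rw [phiC_eq_newtonSeries, jacobiOp_newtonSeries, newtonSeries, newtonSeries, mul_sum]
  exact sum_congr rfl fun k _ => by rw [laguerre_coeff_succ, mul_assoc]

theorem stmt_13 (lam : ℂ) :
    (∀ x : ℕ, 1 ≤ x →
      -((x : ℂ) + 1) * phiC lam (x + 1) + (2 * (x : ℂ) + 1) * phiC lam x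
        - (x : ℂ) * phiC lam (x - 1) = lam * phiC lam x) ∧
    -phiC lam 1 + phiC lam 0 = lam * phiC lam 0 := by
  refine ⟨fun x _ => jacobiOp_phiC lam x, ?_⟩
  simpa [jacobiOp] using jacobiOp_phiC lam 0
end

section
/- Fix an integer p ≥ 3. The smallest positive root s(μ) of g(μ,s) = μ^{-1}(μ+1)^{1/(p-1)} + μ^{-1}s^p - s satisfies s(μ) ≤ μ^{-(p-2)/(p-1)} + O(μ^{-(2p-3)/(p-1)}) as μ → ∞; in particular there exist constants C, μ_1 > 0 such that s(μ) ≤ μ^{-(p-2)/(p-1)} + C μ^{-(2p-3)/(p-1)} for all μ > μ_1. -/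
open Real Filter

theorem stmt_17 (p : ℕ) (hp : 3 ≤ p) (μ₀ : ℝ) (s : ℝ → ℝ)
    (hfix : ∀ μ : ℝ, μ₀ < μ →
      s μ = μ⁻¹ * (μ + 1) ^ ((1:ℝ) / (p - 1)) + μ⁻¹ * s μ ^ p)
    (hpos : ∀ μ : ℝ, μ₀ < μ → 0 < s μ)
    (hle : ∀ μ : ℝ, μ₀ < μ → s μ ≤ (μ / p) ^ ((1:ℝ) / (p - 1))) :
    ∃ C : ℝ, 0 < C ∧ ∃ μ₁ : ℝ, 0 < μ₁ ∧ ∀ μ : ℝ, μ₁ < μ →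
      s μ ≤ μ ^ (-(((p : ℝ) - 2) / ((p : ℝ) - 1)))
            + C * μ ^ (-((2 * (p : ℝ) - 3) / ((p : ℝ) - 1))) := by
  set q : ℝ := (p : ℝ) with hqdef
  have hq : (3:ℝ) ≤ q := by rw [hqdef]; exact_mod_cast hp
  have hq1 : (0:ℝ) < q - 1 := by linarith
  set α : ℝ := (1:ℝ) / (q - 1) with hαdef
  have hα0 : 0 < α := by positivity
  have hα1 : α ≤ 1 := by
    rw [hαdef, div_le_one hq1]; linarith
  refine ⟨1 + 4^p, by positivity, max μ₀ 1 + 1, by positivity, ?_⟩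
  intro μ hμ
  have hμ0 : μ₀ < μ := lt_of_le_of_lt (le_trans (le_max_left _ _) (by linarith)) hμ
  have hμ1 : (1:ℝ) < μ := lt_of_le_of_lt (le_trans (le_max_right _ _) (by linarith)) hμ
  have hμpos : (0:ℝ) < μ := by linarith
  have hμne : μ ≠ 0 := ne_of_gt hμpos
  set a : ℝ := μ⁻¹ * (μ + 1) ^ α with hadef
  have heq : s μ = a + μ⁻¹ * s μ ^ p := hfix μ hμ0
  have hspos : 0 < s μ := hpos μ hμ0
  have hapos : 0 < a := by
    rw [hadef]
    have : (0:ℝ) < (μ + 1) ^ α := Real.rpow_pos_of_pos (by linarith) α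
    positivity
  set b : ℝ := μ ^ (-((q - 2) / (q - 1))) with hbdef
  set c : ℝ := μ ^ (-((2 * q - 3) / (q - 1))) with hcdef
  have hbpos : 0 < b := Real.rpow_pos_of_pos hμpos _
  have hcpos : 0 < c := Real.rpow_pos_of_pos hμpos _
  -- cast for nat subtraction
  have hcast : ((p - 1 : ℕ) : ℝ) = q - 1 := by
    rw [Nat.cast_sub (by omega)]; simp [hqdef]
  -- step 1: s^(p-1) ≤ μ/p
  have hsp1 : s μ ^ (p - 1) ≤ μ / q := by
    have h1 : s μ ^ (p-1) ≤ ((μ / q) ^ α) ^ (p-1) :=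
      pow_le_pow_left₀ hspos.le (hle μ hμ0) _
    have h2 : ((μ / q) ^ α) ^ (p-1) = μ / q := by
      rw [← Real.rpow_natCast ((μ / q) ^ α) (p-1),
        ← Real.rpow_mul (by positivity), hcast]
      rw [hαdef, one_div, inv_mul_cancel₀ (ne_of_gt hq1), Real.rpow_one]
    rwa [h2] at h1
  -- step 2: μ⁻¹ * s^p ≤ s/q
  have hfeed : μ⁻¹ * s μ ^ p ≤ s μ / q := by
    have hps : s μ ^ p = s μ ^ (p-1) * s μ := by
      rw [← pow_succ]; congr 1; omega
    have h3 : s μ ^ (p-1) * s μ ≤ (μ / q) * s μ :=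
      mul_le_mul_of_nonneg_right hsp1 hspos.le
    calc μ⁻¹ * s μ ^ p ≤ μ⁻¹ * ((μ / q) * s μ) := by
          rw [hps]; exact mul_le_mul_of_nonneg_left h3 (by positivity)
      _ = s μ / q := by field_simp
  -- step 3: s ≤ 2a
  have hs2a : s μ ≤ 2 * a := by
    have h4 : s μ / q ≤ s μ / 3 := by
      apply div_le_div_of_nonneg_left hspos.le (by norm_num) hq
    linarith
  -- rpow arithmetic
  have hb : μ⁻¹ * μ ^ α = b := by
    rw [hbdef, ← Real.rpow_neg_one μ, ← Real.rpow_add hμpos]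
    congr 1
    rw [hαdef]; field_simp; ring
  have hc : μ⁻¹ * b = c := by
    rw [hbdef, hcdef, ← Real.rpow_neg_one μ, ← Real.rpow_add hμpos]
    congr 1
    field_simp; ring
  -- step 4: a ≤ b + c
  have habc : a ≤ b + c := by
    have hsplit : (μ + 1) ^ α ≤ μ ^ α * (1 + μ⁻¹) := by
      have he : μ + 1 = μ * (1 + μ⁻¹) := by field_simp
      rw [he, Real.mul_rpow hμpos.le (by positivity)]
      refine mul_le_mul_of_nonneg_left ?_ (Real.rpow_nonneg hμpos.le α)
      calc (1 + μ⁻¹) ^ α ≤ (1 + μ⁻¹) ^ (1:ℝ) :=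
            Real.rpow_le_rpow_of_exponent_le (by simp; positivity) hα1
        _ = 1 + μ⁻¹ := Real.rpow_one _
    calc a ≤ μ⁻¹ * (μ ^ α * (1 + μ⁻¹)) := by
          rw [hadef]; exact mul_le_mul_of_nonneg_left hsplit (by positivity)
      _ = μ⁻¹ * μ ^ α + μ⁻¹ * (μ⁻¹ * μ ^ α) := by ring
      _ = b + μ⁻¹ * b := by rw [hb]
      _ = b + c := by rw [hc]
  have hcb : c ≤ b := by
    rw [hbdef, hcdef]
    apply Real.rpow_le_rpow_of_exponent_le hμ1.le
    rw [neg_le_neg_iff, div_le_div_iff_of_pos_right hq1]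
    linarith
  -- step 5: s ≤ 4b
  have hs4b : s μ ≤ 4 * b := by linarith
  -- step 6: μ⁻¹ s^p ≤ 4^p * c
  have hfeed2 : μ⁻¹ * s μ ^ p ≤ 4^p * c := by
    have h5 : s μ ^ p ≤ (4 * b) ^ p := pow_le_pow_left₀ hspos.le hs4b p
    have h6 : (4 * b) ^ p = 4^p * b^p := mul_pow 4 b p
    have h7 : μ⁻¹ * b ^ p ≤ c := by
      have hbp : b ^ p = μ ^ ((-((q - 2) / (q - 1))) * q) := by
        rw [hbdef, ← Real.rpow_natCast (μ ^ (-((q - 2) / (q - 1)))) p,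
          ← Real.rpow_mul hμpos.le, hqdef]
      rw [hbp, ← Real.rpow_neg_one μ, ← Real.rpow_add hμpos, hcdef]
      apply Real.rpow_le_rpow_of_exponent_le hμ1.le
      have h1 : (-1 : ℝ) + -((q - 2) / (q - 1)) * q = (-(q-2)*q)/(q-1) + (-1) := by
        ring
      have h2 : -((2*q - 3)/(q - 1)) = (-(2*q-3))/(q-1) := by ring
      rw [h1, h2, div_add' _ _ _ (ne_of_gt hq1),
        div_le_div_iff_of_pos_right hq1]
      nlinarith [hq]
    calc μ⁻¹ * s μ ^ p ≤ μ⁻¹ * (4^p * b^p) := by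
          rw [← h6]; exact mul_le_mul_of_nonneg_left h5 (by positivity)
      _ = 4^p * (μ⁻¹ * b^p) := by ring
      _ ≤ 4^p * c := by
          exact mul_le_mul_of_nonneg_left h7 (by positivity)
  -- conclusion
  calc s μ = a + μ⁻¹ * s μ ^ p := heq
    _ ≤ (b + c) + 4^p * c := add_le_add habc hfeed2
    _ = b + (1 + 4^p) * c := by ring
end
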